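/- arXiv:1712.06143 — 3 statements merged into one kernel-verified Lean document; each statement's English description precedes it below -/
import Mathlib

section
/- A digraph D is strongly connected if and only if its planar dual digraph D* is acyclic, where each dual edge is oriented from the face on the left of the corresponding arc to the face on its right. -/
/-- The vertex at which a dart `(a, b)` is based: the tail of arc `a` for
`b = true`, the head for `b = false`. -/
def dartVert {V A : Type} (tail head : A → V) (d : A × Bool) : V :=
  if d.2 then tail d.1 else head d.1

/-- The dart-reversing involution. -/
def flipDart {A : Type} : Equiv.Perm (A × Bool) :=
  ⟨fun d => (d.1, !d.2), fun d => (d.1, !d.2),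
    fun d => by simp, fun d => by simp⟩

/-- The face setoid of a rotation system: orbits of the face permutation
`rot ∘ flip`. -/
def faceSetoidPD {A : Type} (rot : Equiv.Perm (A × Bool)) : Setoid (A × Bool) :=
  ⟨Equiv.Perm.SameCycle ((flipDart).trans rot : Equiv.Perm (A × Bool)),
    ⟨fun x => Equiv.Perm.SameCycle.refl _ x, Equiv.Perm.SameCycle.symm,
      Equiv.Perm.SameCycle.trans⟩⟩

/-- A connected digraph embedded in the plane, given combinatorially: a digraph
`(V, A)` with `tail`/`head` maps, together with a rotation system on its darts
(each arc `a` has two darts `(a,true)` at its tail and `(a,false)` at its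
head): the rotation fixes the base vertex of each dart and is transitive on
the darts at each vertex, the underlying graph is connected, and the number of
orbits of the face permutation satisfies Euler's formula `|V| - |A| + |F| = 2`,
so that the embedding has genus 0. -/
structure PlaneDigraph (V A : Type) [Fintype V] [Fintype A] where
  tail : A → V
  head : A → V
  rot : Equiv.Perm (A × Bool)
  rot_vert : ∀ d, dartVert tail head (rot d) = dartVert tail head d
  rot_orbit : ∀ d d', dartVert tail head d = dartVert tail head d' → rot.SameCycle d d'
  connected : ∀ u v : V, Relation.ReflTransGen
    (fun x y => ∃ a : A, (tail a = x ∧ head a = y) ∨ (tail a = y ∧ head a = x)) u v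
  euler : Nat.card V + Nat.card (Quotient (faceSetoidPD rot)) = Nat.card A + 2

namespace PlaneDigraph

variable {V A : Type} [Fintype V] [Fintype A] (D : PlaneDigraph V A)

/-- The faces of a plane digraph: orbits of the face permutation. -/
def Faces : Type := Quotient (faceSetoidPD D.rot)

/-- The face on the left of an arc. -/
def leftFace (a : A) : D.Faces := Quotient.mk (faceSetoidPD D.rot) (a, true)

/-- The face on the right of an arc. -/
def rightFace (a : A) : D.Faces := Quotient.mk (faceSetoidPD D.rot) (a, false)

/-- `D` is strongly connected. -/
def StronglyConnected : Prop :=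
  ∀ u v : V, Relation.ReflTransGen (fun x y => ∃ a : A, D.tail a = x ∧ D.head a = y) u v

/-- The dual digraph `D*` is acyclic: it has no directed cycle, where each dual
arc goes from the face on the left of the corresponding arc of `D` to the face
on its right. -/
def DualAcyclic : Prop :=
  ∀ f : D.Faces, ¬ Relation.TransGen
    (fun f g => ∃ a : A, D.leftFace a = f ∧ D.rightFace a = g) f f

end PlaneDigraph

/-!
Let `δ : ℚ^V → ℚ^A`, `δ z a = z (head a) - z (tail a)`, be the coboundary of `D` and
`∂ : ℚ^A → ℚ^F`, `∂ y = ∑ a, y a • (left a - right a)`, the boundary map of the dual.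
`D` is strongly connected iff no nonzero `y ≥ 0` lies in `range δ`: such a `δ z` makes `z` weakly
increasing along arcs and strictly along one, which no closed walk allows, while the indicator of
the set reachable from a vertex is such a `z` when that set is proper.
`D*` is acyclic iff no nonzero `y ≥ 0` lies in `ker ∂`: a directed dual cycle is one, and from
one, flow conservation lets us follow positive arcs across faces until a face repeats.
Planarity is used only for `range δ = ker ∂`: `∂ δ = 0` because face boundaries are closed walks,
and by Euler's formula both spaces have dimension `|V| - 1 = |A| - |F| + 1`, since `D` and `D*`
are connected.
-/

theorem Relation.exists_transGen_self_of_forall_exists {α : Type*} [Finite α]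
    {r : α → α → Prop} {p : α → Prop} (h : ∀ x, p x → ∃ y, p y ∧ r x y) {x : α} (hx : p x) :
    ∃ y, Relation.TransGen r y y := by
  by_contra! hacyclic
  have : Std.Irrefl (flip (Relation.TransGen r)) := ⟨hacyclic⟩
  have : IsTrans α (flip (Relation.TransGen r)) := ⟨fun _ _ _ hab hbc => hbc.trans hab⟩
  obtain ⟨m, hm, hmin⟩ := (Finite.wellFounded_of_trans_of_irrefl
    (flip (Relation.TransGen r))).has_min {x | p x} ⟨x, hx⟩
  obtain ⟨y, hy, hmy⟩ := h m hm
  exact hmin y hy (.single hmy)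

theorem Module.finrank_le_one_of_forall_apply_eq {K ι : Type*} [Field K] [Fintype ι]
    (p : Submodule K (ι → K)) (h : ∀ z ∈ p, ∀ i j, z i = z j) : Module.finrank K p ≤ 1 := by
  have hp : p ≤ K ∙ (1 : ι → K) := fun z hz => by
    rw [Submodule.mem_span_singleton]
    rcases isEmpty_or_nonempty ι with hι | ⟨⟨i⟩⟩
    · exact ⟨0, Subsingleton.elim _ _⟩
    · exact ⟨z i, funext fun j => by simp [h z hz i j]⟩
  exact (Submodule.finrank_mono hp).trans ((finrank_span_le_card _).trans (by simp))

@[simp] lemma flipDart_true {A : Type} (a : A) : flipDart (a, true) = (a, false) := rfl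

@[simp] lemma flipDart_false {A : Type} (a : A) : flipDart (a, false) = (a, true) := rfl

lemma flipDart_flipDart {A : Type} (d : A × Bool) : flipDart (flipDart d) = d := by
  obtain ⟨a, _ | _⟩ := d <;> rfl

namespace PlaneDigraph

open Matrix
open scoped Classical

variable {V A : Type} [Fintype V] [Fintype A] (D : PlaneDigraph V A)

noncomputable instance : Fintype D.Faces :=
  have : Finite D.Faces := Quotient.finite _
  Fintype.ofFinite _

def base (d : A × Bool) : V := dartVert D.tail D.head d

def faceOf (d : A × Bool) : D.Faces := Quotient.mk _ d

@[simp] lemma base_true (a : A) : D.base (a, true) = D.tail a := rfl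

@[simp] lemma base_false (a : A) : D.base (a, false) = D.head a := rfl

@[simp] lemma faceOf_true (a : A) : D.faceOf (a, true) = D.leftFace a := rfl

@[simp] lemma faceOf_false (a : A) : D.faceOf (a, false) = D.rightFace a := rfl

lemma faceOf_rot (d : A × Bool) : D.faceOf (D.rot d) = D.faceOf (flipDart d) := by
  have h : D.faceOf ((flipDart.trans D.rot) (flipDart d)) = D.faceOf (flipDart d) :=
    Quotient.sound (Equiv.Perm.sameCycle_apply_left.2 .rfl)
  rwa [Equiv.trans_apply, flipDart_flipDart] at h

/-- Each face enters a vertex as often as it leaves it: `rot` permutes the darts, fixing their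
base vertex and moving the face of `d` to the face of `flipDart d`. -/
lemma sum_faceOf_flipDart {β : Type*} [AddCommMonoid β] (φ : D.Faces → V → β) :
    ∑ d, φ (D.faceOf (flipDart d)) (D.base d) = ∑ d, φ (D.faceOf d) (D.base d) := by
  rw [← Equiv.sum_comp D.rot fun d => φ (D.faceOf d) (D.base d)]
  simp only [faceOf_rot, base, D.rot_vert]

lemma iff_of_forall_tail_iff_head (P : V → Prop) (h : ∀ a, P (D.tail a) ↔ P (D.head a))
    (u v : V) : P u ↔ P v := by
  induction D.connected u v with
  | refl => rfl
  | tail _ hstep ih =>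
    obtain ⟨a, ⟨rfl, rfl⟩ | ⟨rfl, rfl⟩⟩ := hstep
    exacts [ih.trans (h a), ih.trans (h a).symm]

lemma eq_of_forall_tail_eq_head {β : Type*} (z : V → β) (h : ∀ a, z (D.tail a) = z (D.head a))
    (u v : V) : z u = z v :=
  ((D.iff_of_forall_tail_iff_head (z u = z ·) fun a => by rw [h a]) u v).1 rfl

lemma eq_of_base_eq_of_rot_invariant {β : Type*} (W : A × Bool → β)
    (hrot : ∀ d, W (D.rot d) = W d) {d d' : A × Bool} (h : D.base d = D.base d') : W d = W d' := by
  obtain ⟨n, rfl⟩ := (D.rot_orbit d d' h).exists_nat_pow_eq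
  rw [Equiv.Perm.coe_pow]
  exact (congrFun (Function.iterate_invariant (funext hrot) n) d).symm

lemma eq_of_flipDart_rot_invariant {β : Type*} (W : A × Bool → β)
    (hflip : ∀ d, W (flipDart d) = W d) (hrot : ∀ d, W (D.rot d) = W d) (d d' : A × Bool) :
    W d = W d' := by
  let P : V → Prop := fun x => ∀ e, D.base e = x → W e = W d
  have hP : ∀ e, P (D.base e) ↔ W e = W d := fun e =>
    ⟨fun h => h e rfl, fun h _ he => (D.eq_of_base_eq_of_rot_invariant W hrot he).trans h⟩
  have hP_arc : ∀ a, P (D.tail a) ↔ P (D.head a) := fun a => by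
    rw [← base_true, ← base_false, hP, hP, ← hflip (a, true), flipDart_true]
  exact ((hP d').1 ((D.iff_of_forall_tail_iff_head P hP_arc _ _).1 ((hP d).2 rfl))).symm

lemma eq_of_forall_leftFace_eq_rightFace {β : Type*} (w : D.Faces → β)
    (h : ∀ a, w (D.leftFace a) = w (D.rightFace a)) (f g : D.Faces) : w f = w g := by
  have hflip : ∀ d, w (D.faceOf (flipDart d)) = w (D.faceOf d) := by
    rintro ⟨a, _ | _⟩
    exacts [h a, (h a).symm]
  have hrot : ∀ d, w (D.faceOf (D.rot d)) = w (D.faceOf d) := fun d => by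
    rw [faceOf_rot, hflip]
  exact Quotient.inductionOn₂ f g (D.eq_of_flipDart_rot_invariant (w ∘ D.faceOf) hflip hrot)

noncomputable def vertexIncidence : Matrix A V ℚ :=
  Matrix.of fun a => Pi.single (D.head a) 1 - Pi.single (D.tail a) 1

noncomputable def faceIncidence : Matrix D.Faces A ℚ :=
  (Matrix.of fun a => Pi.single (D.leftFace a) 1 - Pi.single (D.rightFace a) 1)ᵀ

lemma vertexIncidence_mulVec_apply (z : V → ℚ) (a : A) :
    (D.vertexIncidence *ᵥ z) a = z (D.head a) - z (D.tail a) := by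
  simp only [vertexIncidence, Matrix.mulVec, Matrix.of_apply, sub_dotProduct, single_one_dotProduct]

lemma vertexIncidence_mulVec_eq_zero_iff (z : V → ℚ) :
    D.vertexIncidence *ᵥ z = 0 ↔ ∀ a, z (D.tail a) = z (D.head a) := by
  simp only [funext_iff, vertexIncidence_mulVec_apply, Pi.zero_apply, sub_eq_zero]
  exact forall_congr' fun _ => eq_comm

lemma nonneg_vertexIncidence_mulVec_iff (z : V → ℚ) :
    0 ≤ D.vertexIncidence *ᵥ z ↔ ∀ a, z (D.tail a) ≤ z (D.head a) := by
  simp only [Pi.le_def, vertexIncidence_mulVec_apply, Pi.zero_apply, sub_nonneg]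

lemma faceIncidence_transpose_mulVec_apply (w : D.Faces → ℚ) (a : A) :
    (D.faceIncidenceᵀ *ᵥ w) a = w (D.leftFace a) - w (D.rightFace a) := by
  simp only [faceIncidence, Matrix.transpose_transpose, Matrix.mulVec, Matrix.of_apply,
    sub_dotProduct, single_one_dotProduct]

lemma faceIncidence_mulVec_apply (y : A → ℚ) (f : D.Faces) :
    (D.faceIncidence *ᵥ y) f =
      ∑ a with D.leftFace a = f, y a - ∑ a with D.rightFace a = f, y a := by
  simp [faceIncidence, Matrix.mulVec, dotProduct, sub_mul, Finset.sum_sub_distrib,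
    Finset.sum_filter, Pi.single_apply, eq_comm]

lemma faceIncidence_mulVec_single (a : A) :
    D.faceIncidence *ᵥ Pi.single a 1 =
      Pi.single (D.leftFace a) 1 - Pi.single (D.rightFace a) 1 := by
  ext f
  simp [faceIncidence]

lemma faceIncidence_mulVec_vertexIncidence_mulVec (z : V → ℚ) :
    D.faceIncidence *ᵥ (D.vertexIncidence *ᵥ z) = 0 := by
  ext f
  have h := D.sum_faceOf_flipDart fun g v => (Pi.single g 1 : D.Faces → ℚ) f * z v
  simp only [Fintype.sum_prod_type, Fintype.sum_bool, Finset.sum_add_distrib, flipDart_true,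
    flipDart_false, faceOf_true, faceOf_false, base_true, base_false] at h
  change ∑ a, D.faceIncidence f a * (D.vertexIncidence *ᵥ z) a = 0
  simp only [faceIncidence, Matrix.transpose_apply, Matrix.of_apply, vertexIncidence_mulVec_apply,
    Pi.sub_apply, sub_mul, mul_sub, Finset.sum_sub_distrib]
  linarith

lemma finrank_ker_vertexIncidence_le_one :
    Module.finrank ℚ (LinearMap.ker D.vertexIncidence.mulVecLin) ≤ 1 :=
  Module.finrank_le_one_of_forall_apply_eq _ fun z hz =>
    D.eq_of_forall_tail_eq_head z ((D.vertexIncidence_mulVec_eq_zero_iff z).1 hz)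

lemma finrank_ker_faceIncidence_transpose_le_one :
    Module.finrank ℚ (LinearMap.ker D.faceIncidenceᵀ.mulVecLin) ≤ 1 :=
  Module.finrank_le_one_of_forall_apply_eq _ fun w hw =>
    D.eq_of_forall_leftFace_eq_rightFace w fun a => by
      have := congrFun (LinearMap.mem_ker.1 hw) a
      rwa [Matrix.mulVecLin_apply, faceIncidence_transpose_mulVec_apply, Pi.zero_apply,
        sub_eq_zero] at this

lemma range_vertexIncidence_le_ker_faceIncidence :
    LinearMap.range D.vertexIncidence.mulVecLin ≤ LinearMap.ker D.faceIncidence.mulVecLin := by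
  rintro _ ⟨z, rfl⟩
  simpa using D.faceIncidence_mulVec_vertexIncidence_mulVec z

lemma range_vertexIncidence_eq_ker_faceIncidence :
    LinearMap.range D.vertexIncidence.mulVecLin = LinearMap.ker D.faceIncidence.mulVecLin := by
  refine Submodule.eq_of_le_of_finrank_le D.range_vertexIncidence_le_ker_faceIncidence ?_
  have h1 := LinearMap.finrank_range_add_finrank_ker D.vertexIncidence.mulVecLin
  have h2 := LinearMap.finrank_range_add_finrank_ker D.faceIncidence.mulVecLin
  have h3 := LinearMap.finrank_range_add_finrank_ker D.faceIncidenceᵀ.mulVecLin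
  have h4 : D.faceIncidenceᵀ.rank = D.faceIncidence.rank := Matrix.rank_transpose _
  have h5 := D.finrank_ker_vertexIncidence_le_one
  have h6 := D.finrank_ker_faceIncidence_transpose_le_one
  have h7 : Nat.card D.Faces = Nat.card (Quotient (faceSetoidPD D.rot)) := rfl
  have h8 := D.euler
  simp only [Module.finrank_fintype_fun_eq_card, Fintype.card_eq_nat_card, Matrix.rank] at *
  omega

lemma le_of_reflTransGen {z : V → ℚ} (hz : ∀ a, z (D.tail a) ≤ z (D.head a)) {u v : V}
    (h : Relation.ReflTransGen (fun x y => ∃ a, D.tail a = x ∧ D.head a = y) u v) : z u ≤ z v := by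
  induction h with
  | refl => exact le_rfl
  | tail _ hstep ih =>
    obtain ⟨a, rfl, rfl⟩ := hstep
    exact ih.trans (hz a)

lemma stronglyConnected_iff_forall_not_pos :
    D.StronglyConnected ↔ ∀ y ∈ LinearMap.range D.vertexIncidence.mulVecLin, ¬ 0 < y := by
  refine ⟨fun hsc => ?_, fun h => ?_⟩
  · rintro _ ⟨z, rfl⟩ hpos
    obtain ⟨hmono, a, ha⟩ := Pi.lt_def.1 hpos
    rw [Matrix.mulVecLin_apply, nonneg_vertexIncidence_mulVec_iff] at hmono
    rw [Matrix.mulVecLin_apply, vertexIncidence_mulVec_apply, Pi.zero_apply, sub_pos] at ha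
    exact (D.le_of_reflTransGen hmono (hsc (D.head a) (D.tail a))).not_gt ha
  · intro u v
    by_contra huv
    let reach : V → Prop := Relation.ReflTransGen (fun x y => ∃ a, D.tail a = x ∧ D.head a = y) u
    let z : V → ℚ := fun x => if reach x then 1 else 0
    have hz : ∀ a, z (D.tail a) ≤ z (D.head a) := fun a => by
      by_cases ht : reach (D.tail a)
      · have hh : reach (D.head a) := Relation.ReflTransGen.tail ht ⟨a, rfl, rfl⟩
        simp [z, ht, hh]
      · simp only [z, ht, if_false]
        split_ifs <;> norm_num
    refine h _ ⟨z, rfl⟩ (lt_of_le_of_ne ((D.nonneg_vertexIncidence_mulVec_iff z).2 hz) fun h0 => ?_)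
    have := D.eq_of_forall_tail_eq_head z ((D.vertexIncidence_mulVec_eq_zero_iff z).1 h0.symm) u v
    simp [z, reach, huv, Relation.ReflTransGen.refl] at this

lemma exists_pos_faceIncidence_mulVec_eq {f g : D.Faces}
    (h : Relation.TransGen (fun f g => ∃ a, D.leftFace a = f ∧ D.rightFace a = g) f g) :
    ∃ y : A → ℚ, 0 < y ∧ D.faceIncidence *ᵥ y = Pi.single f 1 - Pi.single g 1 := by
  induction h with
  | single hfg =>
    obtain ⟨a, rfl, rfl⟩ := hfg
    exact ⟨Pi.single a 1, by simp, D.faceIncidence_mulVec_single a⟩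
  | tail _ hgh ih =>
    obtain ⟨y, hy, hyf⟩ := ih
    obtain ⟨a, rfl, rfl⟩ := hgh
    refine ⟨y + Pi.single a 1, add_pos_of_pos_of_nonneg hy (by simp), ?_⟩
    rw [Matrix.mulVec_add, hyf, faceIncidence_mulVec_single]
    abel

lemma exists_pos_leftFace_eq_rightFace {y : A → ℚ} (hy : 0 ≤ y)
    (hker : D.faceIncidence *ᵥ y = 0) {a : A} (ha : 0 < y a) :
    ∃ a', 0 < y a' ∧ D.leftFace a' = D.rightFace a := by
  have hbal := congrFun hker (D.rightFace a)
  rw [faceIncidence_mulVec_apply, Pi.zero_apply, sub_eq_zero] at hbal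
  have hin : ∑ a' with D.leftFace a' = D.rightFace a, (0 : ℚ) <
      ∑ a' with D.leftFace a' = D.rightFace a, y a' := by
    rw [Finset.sum_const_zero, hbal]
    exact ha.trans_le (Finset.single_le_sum (fun i _ => hy i) (by simp))
  obtain ⟨a', ha', hpos⟩ := Finset.exists_lt_of_sum_lt hin
  exact ⟨a', hpos, (Finset.mem_filter.1 ha').2⟩

lemma dualAcyclic_iff_forall_not_pos :
    D.DualAcyclic ↔ ∀ y ∈ LinearMap.ker D.faceIncidence.mulVecLin, ¬ 0 < y := by
  refine ⟨fun hac y hy hpos => ?_, fun h f hcycle => ?_⟩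
  · obtain ⟨a, ha⟩ := (Pi.lt_def.1 hpos).2
    have hsucc : ∀ g, (∃ b, 0 < y b ∧ D.rightFace b = g) →
        ∃ g', (∃ b, 0 < y b ∧ D.rightFace b = g') ∧ ∃ b, D.leftFace b = g ∧ D.rightFace b = g' := by
      rintro _ ⟨b, hb, rfl⟩
      obtain ⟨b', hb', hleft⟩ := D.exists_pos_leftFace_eq_rightFace hpos.le hy hb
      exact ⟨D.rightFace b', ⟨b', hb', rfl⟩, b', hleft, rfl⟩
    obtain ⟨f, hf⟩ := Relation.exists_transGen_self_of_forall_exists hsucc ⟨a, ha, rfl⟩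
    exact hac f hf
  · obtain ⟨y, hpos, hy⟩ := D.exists_pos_faceIncidence_mulVec_eq hcycle
    exact h y (by rw [LinearMap.mem_ker, Matrix.mulVecLin_apply, hy, sub_self]) hpos

end PlaneDigraph

/-- A connected plane digraph `D` is strongly connected if and
only if its planar dual digraph `D*` (each dual edge oriented from the face on
the left of the corresponding arc to the face on its right) is acyclic. -/
theorem stronglyConnected_iff_dual_acyclic
    {V A : Type} [Fintype V] [Fintype A] (D : PlaneDigraph V A) :
    D.StronglyConnected ↔ D.DualAcyclic := by
  rw [D.stronglyConnected_iff_forall_not_pos, D.dualAcyclic_iff_forall_not_pos,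
    D.range_vertexIncidence_eq_ker_faceIncidence]
end

section
/- Let D be a cubic digraph and E a subset of its arcs. Then E is an even subgraph such that the contraction D/E is strongly connected if and only if the complement O = A \ E is an odd subgraph (every vertex has odd degree in O) containing no directed edge-cut. -/
section
/- A digraph `D = (V, A)` is given by an arc type `A` with `tail` and `head` maps. -/
variable {V A : Type} [Fintype V] [Fintype A] (tail head : A → V)

/-- The degree of vertex `v` with respect to the arc set `S`. -/
noncomputable def degWrt (S : Set A) (v : V) : ℕ :=
  Nat.card {a : A // a ∈ S ∧ (tail a = v ∨ head a = v)}

/-- `S` is an even subgraph: every vertex has even degree with respect to `S`. -/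
def IsEvenSub (S : Set A) : Prop := ∀ v : V, Even (degWrt tail head S v)

/-- `S` is an odd subgraph: every vertex has odd degree with respect to `S`. -/
def IsOddSub (S : Set A) : Prop := ∀ v : V, Odd (degWrt tail head S v)

/-- The underlying undirected graph of the digraph is cubic. -/
def DigraphCubic : Prop :=
  (∀ a : A, tail a ≠ head a) ∧
  ∀ v : V, Nat.card {a : A // tail a = v ∨ head a = v} = 3

/-- The contraction `D/E` is strongly connected: every vertex can reach every
other vertex by a directed walk in which the contracted arcs of `E` may be
traversed in both directions. -/
def ContractionStronglyConnected (E : Set A) : Prop :=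
  ∀ u v : V, Relation.ReflTransGen
    (fun x y => ∃ a : A, (tail a = x ∧ head a = y) ∨ (a ∈ E ∧ tail a = y ∧ head a = x))
    u v

/-- The arc set `O` contains a directed edge-cut: there is a nonempty proper
vertex set `S` such that all arcs between `S` and its complement go from `S`
to `Sᶜ`, and all of these arcs belong to `O`. -/
def ContainsDirectedCut (O : Set A) : Prop :=
  ∃ S : Set V, S.Nonempty ∧ Sᶜ.Nonempty ∧
    (∀ a : A, ¬ (head a ∈ S ∧ tail a ∉ S)) ∧
    (∀ a : A, tail a ∈ S → head a ∉ S → a ∈ O)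

end

/-- Let `D` be a cubic digraph and `E` a subset of its arcs.
Then `E` is an even subgraph such that `D/E` is strongly connected if and only if
the complement `O = A \ E` is an odd subgraph containing no directed edge-cut. -/
theorem even_contraction_strong_iff_odd_no_directed_cut
    {V A : Type} [Fintype V] [Fintype A] (tail head : A → V)
    (hcubic : DigraphCubic tail head) (E : Set A) :
    (IsEvenSub tail head E ∧ ContractionStronglyConnected tail head E) ↔
    (IsOddSub tail head Eᶜ ∧ ¬ ContainsDirectedCut tail head Eᶜ) := by
  classical
  obtain ⟨hnl, hdeg⟩ := hcubic
  -- degree sum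
  have hsum : ∀ v : V, degWrt tail head E v + degWrt tail head Eᶜ v = 3 := by
    intro v
    rw [← hdeg v]
    unfold degWrt
    simp only [Nat.card_eq_fintype_card, Fintype.card_subtype]
    rw [← Finset.card_filter_add_card_filter_not
      (s := Finset.univ.filter (fun a => tail a = v ∨ head a = v)) (p := fun a => a ∈ E)]
    simp [Finset.filter_filter, and_comm]
  have hpar : IsEvenSub tail head E ↔ IsOddSub tail head Eᶜ := by
    constructor <;> intro h v <;> have h1 := h v <;> have h2 := hsum v <;>
      [rw [Nat.even_iff] at h1; rw [Nat.odd_iff] at h1] <;>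
      [rw [Nat.odd_iff]; rw [Nat.even_iff]] <;> omega
  set R : V → V → Prop :=
    fun x y => ∃ a : A, (tail a = x ∧ head a = y) ∨ (a ∈ E ∧ tail a = y ∧ head a = x)
    with hR
  have hconn : ContractionStronglyConnected tail head E ↔
      ¬ ContainsDirectedCut tail head Eᶜ := by
    constructor
    · rintro hsc ⟨S, ⟨s, hs⟩, ⟨t, ht⟩, hno, hcut⟩
      -- Sᶜ is closed under R, but t ∈ Sᶜ reaches s ∈ S
      have hclosed : ∀ x y, R x y → x ∉ S → y ∉ S := by
        rintro x y ⟨a, ha | ha⟩ hx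
        · intro hy
          exact hno a ⟨ha.2 ▸ hy, ha.1 ▸ hx⟩
        · intro hy
          exact hcut a (ha.2.1 ▸ hy) (ha.2.2 ▸ hx) ha.1
      have : ∀ y, Relation.ReflTransGen R t y → y ∉ S := by
        intro y hy
        induction hy with
        | refl => exact ht
        | tail _ hxy ih => exact hclosed _ _ hxy ih
      exact this s (hsc t s) hs
    · intro hnocut u v
      by_contra hnr
      apply hnocut
      refine ⟨{x | Relation.ReflTransGen R u x}ᶜ, ⟨v, hnr⟩, ⟨u, by simpa using Relation.ReflTransGen.refl⟩, ?_, ?_⟩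
      · rintro a ⟨hh, htl⟩
        simp only [Set.mem_compl_iff, Set.mem_setOf_eq, not_not] at hh htl
        exact hh (htl.tail ⟨a, Or.inl ⟨rfl, rfl⟩⟩)
      · intro a htl hh haE
        simp only [Set.mem_compl_iff, Set.mem_setOf_eq, not_not] at htl hh haE
        exact htl (hh.tail ⟨a, Or.inr ⟨haE, rfl, rfl⟩⟩)
  rw [hpar, hconn]
end

section
/- Every minimal edge-cut of a cubic graph that is a matching is a cyclic cut, i.e., after deleting it, both components contain a cycle. -/
open SimpleGraph

section Aux

variable {V : Type}

/-- In a path, at most one edge contains the start vertex. -/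
lemma path_start_partner_unique {H : SimpleGraph V} {w v : V} {p : H.Walk w v}
    (hp : p.IsPath) {a b : V} (ha : s(w, a) ∈ p.edges) (hb : s(w, b) ∈ p.edges) : a = b := by
  cases p with
  | nil => simp at ha
  | @cons _ x _ h q =>
    rw [SimpleGraph.Walk.cons_isPath_iff] at hp
    have key : ∀ c : V, s(w, c) ∈ (SimpleGraph.Walk.cons h q).edges → c = x := by
      intro c hc
      rw [SimpleGraph.Walk.edges_cons, List.mem_cons] at hc
      rcases hc with hc | hc
      · rcases Sym2.eq_iff.mp hc with ⟨-, h2⟩ | ⟨h1, h2⟩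
        · exact h2
        · exact absurd h1 h.ne
      · exact absurd (SimpleGraph.Walk.fst_mem_support_of_mem_edges q hc) hp.2
    rw [key a ha, key b hb]

lemma exists_cycle_aux {H : SimpleGraph V} [Fintype V]
    (hdeg : ∀ w : V, ∃ a b : V, a ≠ b ∧ H.Adj w a ∧ H.Adj w b) (v : V) :
    ∀ (n : ℕ) (w : V) (p : H.Walk w v), p.IsPath → Fintype.card V ≤ p.length + n →
      ∃ (x : V) (c : H.Walk x x), c.IsCycle ∧ H.Reachable x v := by
  intro n
  induction n with
  | zero =>
    intro w p hp hlen
    exfalso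
    have h1 : p.support.length = p.length + 1 := p.length_support
    have h2 := hp.support_nodup.length_le_card
    omega
  | succ n ih =>
    intro w p hp hlen
    haveI := Classical.decEq V
    by_cases hext : ∃ u, H.Adj w u ∧ u ∉ p.support
    · obtain ⟨u, hadj, hu⟩ := hext
      refine ih u (SimpleGraph.Walk.cons hadj.symm p) ?_ ?_
      · rw [SimpleGraph.Walk.cons_isPath_iff]; exact ⟨hp, hu⟩
      · rw [SimpleGraph.Walk.length_cons]; omega
    · push_neg at hext
      obtain ⟨a, b, hab, hwa, hwb⟩ := hdeg w
      have hnb : ∃ u, H.Adj w u ∧ s(w, u) ∉ p.edges := by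
        by_contra hcon
        push_neg at hcon
        exact hab (path_start_partner_unique hp (hcon a hwa) (hcon b hwb))
      obtain ⟨u, hadj, hnedge⟩ := hnb
      have husup : u ∈ p.support := hext u hadj
      have hq : (p.takeUntil u husup).IsPath := hp.takeUntil husup
      refine ⟨u, SimpleGraph.Walk.cons hadj.symm (p.takeUntil u husup), ?_,
        (p.dropUntil u husup).reachable⟩
      refine SimpleGraph.Path.cons_isCycle ⟨_, hq⟩ hadj.symm ?_
      intro hmem
      have h2 := SimpleGraph.Walk.edges_takeUntil_subset p husup hmem
      rw [Sym2.eq_swap] at h2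
      exact hnedge h2

lemma exists_cycle_reach {H : SimpleGraph V} [Fintype V]
    (hdeg : ∀ w : V, ∃ a b : V, a ≠ b ∧ H.Adj w a ∧ H.Adj w b) (v : V) :
    ∃ (x : V) (c : H.Walk x x), c.IsCycle ∧ H.Reachable x v :=
  exists_cycle_aux hdeg v (Fintype.card V) v SimpleGraph.Walk.nil
    (SimpleGraph.Walk.IsPath.nil) (by simp)

end Aux



/-- A graph is cubic (3-regular) if every vertex has exactly 3 neighbors. -/
def IsCubic {V : Type} (G : SimpleGraph V) : Prop :=
  ∀ v : V, (G.neighborSet v).ncard = 3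

/-- `C` is an edge-cut of `G`: a set of edges of `G` whose removal disconnects `G`. -/
def IsEdgeCut {V : Type} (G : SimpleGraph V) (C : Set (Sym2 V)) : Prop :=
  C ⊆ G.edgeSet ∧ ¬ (SimpleGraph.fromEdgeSet (G.edgeSet \ C)).Connected

/-- `C` is a minimal edge-cut of `G`: an inclusion-minimal edge-cut. -/
def IsMinimalEdgeCut {V : Type} (G : SimpleGraph V) (C : Set (Sym2 V)) : Prop :=
  IsEdgeCut G C ∧ ∀ C' : Set (Sym2 V), C' ⊆ C → IsEdgeCut G C' → C' = C

lemma cut_edge_crosses {V : Type} (G : SimpleGraph V) (C : Set (Sym2 V))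
    (hcut : IsMinimalEdgeCut G C) {x y : V}
    (hxy : ¬ (SimpleGraph.fromEdgeSet (G.edgeSet \ C)).Reachable x y)
    (K : (SimpleGraph.fromEdgeSet (G.edgeSet \ C)).ConnectedComponent) :
    ∀ e ∈ C, ∃ a b : V, e = s(a, b) ∧ a ∈ K.supp ∧ b ∉ K.supp := by
  let C' : Set (Sym2 V) :=
    {e | e ∈ C ∧ ∃ a b : V, e = s(a, b) ∧ a ∈ K.supp ∧ b ∉ K.supp}
  have hC'C : C' ⊆ C := fun e he => he.1
  have hclosed : ∀ {u u' : V}, (SimpleGraph.fromEdgeSet (G.edgeSet \ C')).Adj u u' →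
      u ∈ K.supp → u' ∈ K.supp := by
    intro u u' hadj hu
    rw [SimpleGraph.fromEdgeSet_adj _] at hadj
    obtain ⟨⟨hedge, hnotC'⟩, hne⟩ := hadj
    by_cases hC : s(u, u') ∈ C
    · by_contra hu'
      exact hnotC' ⟨hC, u, u', rfl, hu, hu'⟩
    · have hadj' : (SimpleGraph.fromEdgeSet (G.edgeSet \ C)).Adj u u' :=
        (SimpleGraph.fromEdgeSet_adj _).mpr ⟨⟨hedge, hC⟩, hne⟩
      rw [SimpleGraph.ConnectedComponent.mem_supp_iff] at hu ⊢
      rw [← hu]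
      exact SimpleGraph.ConnectedComponent.sound hadj'.symm.reachable
  have hwalk : ∀ {u u' : V} (p : (SimpleGraph.fromEdgeSet (G.edgeSet \ C')).Walk u u'),
      u ∈ K.supp → u' ∈ K.supp := by
    intro u u' p
    induction p with
    | nil => exact id
    | cons h q ih => exact fun hu => ih (hclosed h hu)
  obtain ⟨x0, hx0⟩ := K.exists_rep
  have hx0' : x0 ∈ K.supp := by rw [SimpleGraph.ConnectedComponent.mem_supp_iff]; exact hx0
  have hy0 : ∃ y0 : V, y0 ∉ K.supp := by
    by_contra hcon
    push_neg at hcon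
    have hx := hcon x
    have hy := hcon y
    rw [SimpleGraph.ConnectedComponent.mem_supp_iff] at hx hy
    exact hxy (SimpleGraph.ConnectedComponent.exact (hx.trans hy.symm))
  obtain ⟨y0, hy0⟩ := hy0
  have hcut' : IsEdgeCut G C' := by
    refine ⟨fun e he => hcut.1.1 (hC'C he), ?_⟩
    intro hconn'
    obtain ⟨p⟩ := hconn'.preconnected x0 y0
    exact hy0 (hwalk p hx0')
  have heq : C' = C := hcut.2 C' hC'C hcut'
  intro e he
  rw [← heq] at he
  exact he.2

/-- Every minimal edge-cut of a connected cubic graph that is a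
matching (no two cut edges share a vertex) is a cyclic cut: after deleting it, the
graph falls into exactly two connected components, and every component contains
a cycle. -/
theorem minimal_matching_cut_is_cyclic
    {V : Type} [Fintype V] (G : SimpleGraph V)
    (hconn : G.Connected) (hcubic : IsCubic G)
    (C : Set (Sym2 V)) (hcut : IsMinimalEdgeCut G C)
    (hmatching : ∀ e ∈ C, ∀ f ∈ C, e ≠ f → ∀ v : V, ¬ (v ∈ e ∧ v ∈ f)) :
    Nat.card (SimpleGraph.fromEdgeSet (G.edgeSet \ C)).ConnectedComponent = 2 ∧
    ∀ K : (SimpleGraph.fromEdgeSet (G.edgeSet \ C)).ConnectedComponent,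
      ∃ (v : V) (c : (SimpleGraph.fromEdgeSet (G.edgeSet \ C)).Walk v v),
        c.IsCycle ∧ (SimpleGraph.fromEdgeSet (G.edgeSet \ C)).connectedComponentMk v = K := by
  have hnotconn : ¬ (SimpleGraph.fromEdgeSet (G.edgeSet \ C)).Connected := hcut.1.2
  -- two non-reachable vertices
  have hnotpre : ∃ x y : V, ¬ (SimpleGraph.fromEdgeSet (G.edgeSet \ C)).Reachable x y := by
    by_contra hcon
    push_neg at hcon
    exact hnotconn { preconnected := fun u v => hcon u v, nonempty := hconn.nonempty }
  obtain ⟨x, y, hxy⟩ := hnotpre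
  -- C is nonempty
  have hCne : C.Nonempty := by
    rw [Set.nonempty_iff_ne_empty]
    intro hC
    rw [hC, Set.diff_empty, SimpleGraph.fromEdgeSet_edgeSet] at hnotconn
    exact hnotconn hconn
  obtain ⟨e, he⟩ := hCne
  obtain ⟨a0, b0, rfl⟩ : ∃ a b : V, e = s(a, b) := by
    induction e using Sym2.ind with
    | _ a b => exact ⟨a, b, rfl⟩
  -- every component contains exactly one endpoint of e
  have key : ∀ K : (SimpleGraph.fromEdgeSet (G.edgeSet \ C)).ConnectedComponent,
      (a0 ∈ K.supp ∧ b0 ∉ K.supp) ∨ (b0 ∈ K.supp ∧ a0 ∉ K.supp) := by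
    intro K
    obtain ⟨a, b, heq, ha, hb⟩ := cut_edge_crosses G C hcut hxy K s(a0, b0) he
    rcases Sym2.eq_iff.mp heq with ⟨h1, h2⟩ | ⟨h1, h2⟩
    · exact Or.inl ⟨h1 ▸ ha, h2 ▸ hb⟩
    · exact Or.inr ⟨h2 ▸ ha, h1 ▸ hb⟩
  have hmka : a0 ∈ ((SimpleGraph.fromEdgeSet (G.edgeSet \ C)).connectedComponentMk a0).supp := by
    rw [SimpleGraph.ConnectedComponent.mem_supp_iff]
  have hne : (SimpleGraph.fromEdgeSet (G.edgeSet \ C)).connectedComponentMk a0 ≠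
      (SimpleGraph.fromEdgeSet (G.edgeSet \ C)).connectedComponentMk b0 := by
    rcases key ((SimpleGraph.fromEdgeSet (G.edgeSet \ C)).connectedComponentMk a0) with
      ⟨-, hb⟩ | ⟨-, ha⟩
    · intro hcon
      apply hb
      rw [SimpleGraph.ConnectedComponent.mem_supp_iff]
      exact hcon.symm
    · exact absurd hmka ha
  have huniv : ∀ K : (SimpleGraph.fromEdgeSet (G.edgeSet \ C)).ConnectedComponent,
      K = (SimpleGraph.fromEdgeSet (G.edgeSet \ C)).connectedComponentMk a0 ∨
      K = (SimpleGraph.fromEdgeSet (G.edgeSet \ C)).connectedComponentMk b0 := by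
    intro K
    rcases key K with ⟨ha, -⟩ | ⟨hb, -⟩
    · left; rw [SimpleGraph.ConnectedComponent.mem_supp_iff] at ha; exact ha.symm
    · right; rw [SimpleGraph.ConnectedComponent.mem_supp_iff] at hb; exact hb.symm
  constructor
  · rw [Nat.card_eq_two_iff]
    refine ⟨_, _, hne, ?_⟩
    rw [Set.eq_univ_iff_forall]
    intro K
    rcases huniv K with h | h
    · exact Or.inl h
    · exact Or.inr h
  · -- every component contains a cycle
    have hdeg : ∀ w : V, ∃ a b : V, a ≠ b ∧
        (SimpleGraph.fromEdgeSet (G.edgeSet \ C)).Adj w a ∧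
        (SimpleGraph.fromEdgeSet (G.edgeSet \ C)).Adj w b := by
      intro w
      obtain ⟨p, q, r, hpq, hpr, hqr, hN⟩ := Set.ncard_eq_three.mp (hcubic w)
      have hp : G.Adj w p := by
        have : p ∈ G.neighborSet w := by rw [hN]; exact Set.mem_insert _ _
        exact this
      have hq : G.Adj w q := by
        have : q ∈ G.neighborSet w := by rw [hN]; right; exact Set.mem_insert _ _
        exact this
      have hr : G.Adj w r := by
        have : r ∈ G.neighborSet w := by rw [hN]; right; right; rfl
        exact this
      -- at most one neighbor's edge lies in C
      have hR : ∀ u1 u2 : V, G.Adj w u1 → G.Adj w u2 → s(w, u1) ∈ C → s(w, u2) ∈ C →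
          u1 = u2 := by
        intro u1 u2 h1 h2 hc1 hc2
        by_contra hne12
        have hef : s(w, u1) ≠ s(w, u2) := by
          intro hcon
          rcases Sym2.eq_iff.mp hcon with ⟨-, h⟩ | ⟨hh1, hh2⟩
          · exact hne12 h
          · exact h2.ne hh1
        exact hmatching _ hc1 _ hc2 hef w ⟨Sym2.mem_mk_left _ _, Sym2.mem_mk_left _ _⟩
      have hmk : ∀ u : V, G.Adj w u → s(w, u) ∉ C →
          (SimpleGraph.fromEdgeSet (G.edgeSet \ C)).Adj w u := by
        intro u hu hnc
        exact (SimpleGraph.fromEdgeSet_adj _).mpr ⟨⟨hu, hnc⟩, hu.ne⟩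
      by_cases hcp : s(w, p) ∈ C
      · have hcq : s(w, q) ∉ C := fun h => hpq (hR p q hp hq hcp h)
        have hcr : s(w, r) ∉ C := fun h => hpr (hR p r hp hr hcp h)
        exact ⟨q, r, hqr, hmk q hq hcq, hmk r hr hcr⟩
      · by_cases hcq : s(w, q) ∈ C
        · have hcr : s(w, r) ∉ C := fun h => hqr (hR q r hq hr hcq h)
          exact ⟨p, r, hpr, hmk p hp hcp, hmk r hr hcr⟩
        · exact ⟨p, q, hpq, hmk p hp hcp, hmk q hq hcq⟩
    intro K
    induction K using SimpleGraph.ConnectedComponent.ind with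
    | _ v =>
      obtain ⟨z, c, hc, hreach⟩ := exists_cycle_reach hdeg v
      exact ⟨z, c, hc, SimpleGraph.ConnectedComponent.sound hreach⟩
end
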